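/- arXiv:1708.05607 — 14 statements merged into one kernel-verified Lean document; each statement's English description precedes it below -/
import Mathlib

section
/- Let (W, ≤, ≺) be a Kripke frame with ≤;≺ ⊆ ≺ and ≺ transitive. Then the weak Löb axiom Box(Box A → A) ⊆ Box A holds for all upward-closed A (where the Heyting implication → is computed in the Heyting algebra of upward-closed sets) if and only if ≺ is Up(W)-Noetherian, i.e., for every upward-closed A ≠ W there exists w ∈ Box A with w ∉ A. -/
theorem weak_lob_iff_noetherian {W : Type*} [PartialOrder W]
    (prec : W → W → Prop)
    (hmix : ∀ w v x, w ≤ v → prec v x → prec w x)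
    (htrans : ∀ w v x, prec w v → prec v x → prec w x) :
    (∀ A : Set W, IsUpperSet A →
        {w | ∀ x, prec w x →
              x ∈ {u | ∀ v, u ≤ v →
                    v ∈ {y | ∀ z, prec y z → z ∈ A} → v ∈ A}}
          ⊆ {w | ∀ x, prec w x → x ∈ A}) ↔
      (∀ A : Set W, IsUpperSet A → A ≠ Set.univ →
        ∃ w, w ∈ {u | ∀ x, prec u x → x ∈ A} ∧ w ∉ A) := by
  constructor
  · intro hL A hA hne
    by_contra h
    push_neg at h
    apply hne
    ext w
    simp only [Set.mem_univ, iff_true]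
    have hw : w ∈ {w | ∀ x, prec w x → x ∈ A} := by
      apply hL A hA
      intro x hx v hv hb
      exact h v hb
    exact h w hw
  · intro hN A hA w hw x hwx
    by_contra hxA
    set B : Set W := {v | ∀ v', v ≤ v' →
        (∀ z, prec v' z → ∀ t, z ≤ t → (∀ s, prec t s → s ∈ A) → t ∈ A) →
        ∀ z, prec v' z → z ∈ A} with hB
    have hBup : IsUpperSet B := by
      intro a b hab ha v' hbv'
      exact ha v' (le_trans hab hbv')
    have hBne : B ≠ Set.univ := by
      intro hEq
      have hwB : w ∈ B := by rw [hEq]; exact Set.mem_univ w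
      exact hxA (hwB w le_rfl hw x hwx)
    obtain ⟨u, hu, huB⟩ := hN B hBup hBne
    simp only [hB, Set.mem_setOf_eq] at huB
    push_neg at huB
    obtain ⟨v, huv, hvP, z, hvz, hzA⟩ := huB
    have hzB : z ∈ B := hu z (hmix u v z huv hvz)
    have hzP : ∀ s, prec z s → ∀ t, s ≤ t → (∀ r, prec t r → r ∈ A) → t ∈ A := by
      intro s hzs t hst hbox
      exact hvP s (htrans v z s hvz hzs) t hst hbox
    have hQz : ∀ s, prec z s → s ∈ A := hzB z le_rfl hzP
    exact hzA (hvP z hvz z le_rfl hQz)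
end

section
/- Let H be a Heyting algebra with a unary operator □ satisfying □⊤ = ⊤, □(a ∧ b) = □a ∧ □b, and □a ≤ □□a (a K4-operator). If for every h ∈ H the map t(p) = □p ⇨ h has a fixed point, then □ satisfies the Löb law □(□a ⇨ a) ≤ □a for all a ∈ H. -/
theorem fixpoints_imply_lob {H : Type*} [HeytingAlgebra H] (box : H → H)
    (htop : box ⊤ = ⊤) (hmeet : ∀ a b, box (a ⊓ b) = box a ⊓ box b)
    (htrans : ∀ a, box a ≤ box (box a))
    (hfix : ∀ h : H, ∃ i : H, i = box i ⇨ h) :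
    ∀ a : H, box (box a ⇨ a) ≤ box a := by
  have mono : ∀ x y : H, x ≤ y → box x ≤ box y := by
    intro x y hxy
    have : x ⊓ y = x := inf_eq_left.mpr hxy
    calc box x = box (x ⊓ y) := by rw [this]
      _ = box x ⊓ box y := hmeet x y
      _ ≤ box y := inf_le_right
  intro a
  obtain ⟨i, hi⟩ := hfix a
  have h1 : i ⊓ box i ≤ a := by
    nth_rewrite 1 [hi]; exact himp_inf_le
  have h2 : box i ≤ box a := by
    have : box i ≤ box (i ⊓ box i) := by
      rw [hmeet]; exact le_inf le_rfl (htrans i)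
    exact this.trans (mono _ _ h1)
  have h3 : (box a ⇨ a) ≤ i := by
    rw [hi]
    refine le_himp_iff.mpr ?_
    calc (box a ⇨ a) ⊓ box i ≤ (box a ⇨ a) ⊓ box a := inf_le_inf_left _ h2
      _ ≤ a := himp_inf_le
  exact (mono _ _ h3).trans h2
end

section
/- Let H be a Heyting algebra with a transitive normal operator □ (□⊤=⊤, □(a∧b)=□a∧□b, □a≤□□a) and let h ∈ H. Suppose i ∈ H satisfies i = □i ⇨ h. Then □i = □h. -/
theorem box_fixpoint_eq {H : Type*} [HeytingAlgebra H] (box : H → H)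
    (htop : box ⊤ = ⊤) (hmeet : ∀ a b, box (a ⊓ b) = box a ⊓ box b)
    (htrans : ∀ a, box a ≤ box (box a))
    (h i : H) (hi : i = box i ⇨ h) :
    box i = box h := by
  have mono : ∀ a b : H, a ≤ b → box a ≤ box b := by
    intro a b hab
    have : a ⊓ b = a := inf_eq_left.mpr hab
    calc box a = box (a ⊓ b) := by rw [this]
    _ = box a ⊓ box b := hmeet a b
    _ ≤ box b := inf_le_right
  apply le_antisymm
  · have h1 : i ⊓ box i ≤ h := by
      have := himp_inf_le (a := box i) (b := h)
      rwa [← hi] at this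
    have h2 : box (i ⊓ box i) ≤ box h := mono _ _ h1
    rw [hmeet] at h2
    exact le_trans (le_inf le_rfl (htrans i)) h2
  · exact mono _ _ (hi ▸ le_himp_iff.mpr inf_le_left)
end

section
/- Let H be a Heyting algebra with a normal operator □ (preserving ⊤ and binary meets). If the strong Löb law (□a ⇨ a) ≤ a holds for all a ∈ H, then a ≤ □a holds for all a ∈ H. -/
theorem strong_lob_implies_r {H : Type*} [HeytingAlgebra H] (box : H → H)
    (htop : box ⊤ = ⊤) (hmeet : ∀ a b, box (a ⊓ b) = box a ⊓ box b)
    (hslob : ∀ a : H, (box a ⇨ a) ≤ a) :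
    ∀ a : H, a ≤ box a := by
  intro a
  have h2 : a ≤ box (a ⊓ box a) ⇨ (a ⊓ box a) := by
    rw [le_himp_iff, hmeet]
    exact le_inf inf_le_left (inf_le_right.trans inf_le_left)
  exact (h2.trans (hslob _)).trans inf_le_right
end

section
/- Let H be a Heyting algebra with a normal operator □ satisfying a ≤ □a for all a. Then the strong Löb law (□a ⇨ a) ≤ a holds for all a if and only if the weak Löb law □(□a ⇨ a) ≤ □a holds for all a. -/
theorem strong_lob_iff_weak_lob {H : Type*} [HeytingAlgebra H] (box : H → H)
    (htop : box ⊤ = ⊤) (hmeet : ∀ a b, box (a ⊓ b) = box a ⊓ box b)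
    (hr : ∀ a : H, a ≤ box a) :
    (∀ a : H, (box a ⇨ a) ≤ a) ↔ (∀ a : H, box (box a ⇨ a) ≤ box a) := by
  have mono : ∀ x y : H, x ≤ y → box x ≤ box y := by
    intro x y hxy
    have : box (x ⊓ y) = box x ⊓ box y := hmeet x y
    rw [inf_eq_left.mpr hxy] at this
    rw [this]; exact inf_le_right
  constructor
  · intro hs a
    exact mono _ _ (hs a)
  · intro hw a
    have h1 : (box a ⇨ a) ≤ box a :=
      le_trans (hr _) (hw a)
    calc (box a ⇨ a) ≤ box a ⊓ (box a ⇨ a) := le_inf h1 le_rfl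
      _ ≤ a := inf_himp_le
end

section
/- Let H be a Heyting algebra with a normal operator □. Then the two axiom schemes (1) □a ≤ ((b ⇨ a) ⇨ b) ⇨ b for all a, b, and (2) □a ≤ (b ⇨ a) ∨ b for all a, b, are equivalent (each implies the other). -/
theorem next_iff_derv {H : Type*} [HeytingAlgebra H] (box : H → H)
    (htop : box ⊤ = ⊤) (hmeet : ∀ a b, box (a ⊓ b) = box a ⊓ box b) :
    (∀ a b : H, box a ≤ ((b ⇨ a) ⇨ b) ⇨ b) ↔
      (∀ a b : H, box a ≤ (b ⇨ a) ⊔ b) := by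
  constructor
  · intro h1 a b
    set c := (b ⇨ a) ⊔ b with hc
    have hca : c ⇨ a ≤ c := by
      calc c ⇨ a ≤ b ⇨ a := himp_le_himp_right le_sup_right
        _ ≤ c := le_sup_left
    have h := h1 a c
    have htopc : (c ⇨ a) ⇨ c = ⊤ := himp_eq_top_iff.mpr hca
    rwa [htopc, top_himp] at h
  · intro h2 a b
    have step : (b ⇨ a) ⊔ b ≤ ((b ⇨ a) ⇨ b) ⇨ b := by
      rw [le_himp_iff, inf_comm, inf_sup_left]
      exact sup_le himp_inf_le inf_le_right
    exact le_trans (h2 a b) step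
end

section
/- Let H be a complete Heyting algebra and define ⊛h = ⨅_{i∈H} (i ∨ (i ⇨ h)) (the point-free coderivative). Then ⊛ is a normal operator: ⊛⊤ = ⊤ and ⊛(h ∧ k) = ⊛h ∧ ⊛k for all h, k ∈ H. -/
theorem coderivative_normal {H : Type*} [Order.Frame H] :
    (⨅ i : H, i ⊔ (i ⇨ (⊤ : H))) = ⊤ ∧
      ∀ h k : H, (⨅ i : H, i ⊔ (i ⇨ (h ⊓ k))) =
        (⨅ i : H, i ⊔ (i ⇨ h)) ⊓ (⨅ i : H, i ⊔ (i ⇨ k)) := by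
  constructor
  · simp [himp_top]
  · intro h k
    apply le_antisymm
    · exact le_inf
        (iInf_mono fun i => sup_le_sup_left (himp_le_himp_left inf_le_left) i)
        (iInf_mono fun i => sup_le_sup_left (himp_le_himp_left inf_le_right) i)
    · rw [le_iInf_iff]
      intro i
      calc (⨅ i : H, i ⊔ (i ⇨ h)) ⊓ (⨅ i : H, i ⊔ (i ⇨ k))
          ≤ (i ⊔ (i ⇨ h)) ⊓ (i ⊔ (i ⇨ k)) := inf_le_inf (iInf_le _ i) (iInf_le _ i)
        _ = i ⊔ ((i ⇨ h) ⊓ (i ⇨ k)) := (sup_inf_left _ _ _).symm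
        _ = i ⊔ (i ⇨ (h ⊓ k)) := by rw [himp_inf_distrib]
end

section
/- Let H be a Heyting algebra and let i ≤ h in H. Then h is i-dense (meaning for all j ≥ i, h ∧ j = i implies j = i) if and only if there exists j ∈ H with h = j ∨ (j ⇨ i). -/
theorem dense_iff_exists {H : Type*} [HeytingAlgebra H] (i h : H) (hih : i ≤ h) :
    (∀ j : H, i ≤ j → h ⊓ j = i → j = i) ↔ ∃ j : H, h = j ⊔ (j ⇨ i) := by
  constructor
  · intro hd
    refine ⟨h, ?_⟩
    have h1 : h ⊓ (h ⇨ i) = i := by rw [inf_himp, inf_eq_right.mpr hih]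
    rw [hd (h ⇨ i) le_himp h1, sup_eq_left.mpr hih]
  · rintro ⟨j, rfl⟩ k hik hk
    have h1 : j ⊓ k ≤ i := by rw [← hk]; exact inf_le_inf_right _ le_sup_left
    have h2 : k ≤ j ⇨ i := le_himp_iff.mpr (by rwa [inf_comm])
    have h3 : k ≤ i := hk ▸ le_inf (h2.trans le_sup_right) le_rfl
    exact le_antisymm h3 hik
end

section
/- For a complete Heyting algebra H and i ∈ H, the point-free coderivative ⊛i = ⨅_{j∈H}(j ∨ (j ⇨ i)) equals the infimum of all h ∈ H such that h ≥ i and h is i-dense. -/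
theorem coderivative_eq_inf_dense {H : Type*} [Order.Frame H] (i : H) :
    (⨅ j : H, j ⊔ (j ⇨ i)) =
      sInf {h : H | i ≤ h ∧ ∀ j : H, i ≤ j → h ⊓ j = i → j = i} := by
  apply le_antisymm
  · apply le_sInf
    rintro h ⟨hih, hdense⟩
    refine (iInf_le _ h).trans ?_
    have key : (h ⇨ i) ⊔ i = i := by
      apply hdense _ le_sup_right
      apply le_antisymm
      · rw [inf_sup_left]
        exact sup_le inf_himp_le inf_le_right
      · exact le_inf hih le_sup_right
    have hd : h ⇨ i ≤ h := le_sup_left.trans (key ▸ hih)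
    exact sup_le le_rfl hd
  · apply le_iInf
    intro j
    apply sInf_le
    refine ⟨le_sup_of_le_right le_himp, ?_⟩
    intro k hik hjk
    rw [inf_sup_right] at hjk
    have h1 : j ⊓ k ≤ i := le_sup_left.trans_eq hjk
    have h2 : k ≤ j ⇨ i := le_himp_iff.2 (by rwa [inf_comm] at h1)
    have h3 : k ≤ i := by
      have : (j ⇨ i) ⊓ k = k := inf_eq_right.2 h2
      calc k = (j ⇨ i) ⊓ k := this.symm
        _ ≤ (j ⊓ k) ⊔ ((j ⇨ i) ⊓ k) := le_sup_right
        _ = i := hjk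
    exact le_antisymm h3 hik
end

section
/- Let (W, ≤) be a poset and let < be its strict order. The Alexandroff topology of upward-closed sets on W is scattered (every nonempty subset has an isolated point in the subspace topology) if and only if < has no infinite ascending chains, i.e., every nonempty subset of W has a ≤-maximal element. -/
theorem alexandroff_scattered_iff {W : Type*} [PartialOrder W] :
    (∀ S : Set W, S.Nonempty →
        ∃ x ∈ S, ∃ U : Set W, IsUpperSet U ∧ U ∩ S = {x}) ↔
      (∀ S : Set W, S.Nonempty → ∃ m ∈ S, ∀ x ∈ S, m ≤ x → x = m) := by
  constructor
  · intro h S hS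
    obtain ⟨x, hxS, U, hU, hUS⟩ := h S hS
    have hxU : x ∈ U ∩ S := by rw [hUS]; rfl
    refine ⟨x, hxS, fun y hyS hxy => ?_⟩
    have : y ∈ U ∩ S := ⟨hU hxy hxU.1, hyS⟩
    rwa [hUS] at this
  · intro h S hS
    obtain ⟨m, hmS, hmax⟩ := h S hS
    refine ⟨m, hmS, {y | m ≤ y}, fun a b hab ha => le_trans ha hab, ?_⟩
    ext y
    constructor
    · rintro ⟨hmy, hyS⟩; exact hmax y hyS hmy
    · rintro rfl; exact ⟨le_rfl, hmS⟩
end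

section
/- Let (W, ≤) be a poset, Up(W) its Heyting algebra of upward-closed sets, and define ⊛A = {w ∈ W | ∀v, w < v → v ∈ A} where < is the strict order. Then the strong Löb law (⊛A → A) ⊆ A holds in Up(W) for all upward-closed A (with → the Heyting implication of Up(W)) if and only if every nonempty subset of W has a maximal element. -/
theorem strong_lob_iff_max {W : Type*} [PartialOrder W] :
    (∀ A : Set W, IsUpperSet A →
        {w | ∀ v, w ≤ v → (v ∈ {u | ∀ x, u < x → x ∈ A} → v ∈ A)} ⊆ A) ↔
      (∀ S : Set W, S.Nonempty → ∃ m ∈ S, ∀ x ∈ S, m ≤ x → x = m) := by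
  constructor
  · intro hLob S ⟨w0, hw0⟩
    by_contra hno
    push_neg at hno
    set A : Set W := {w | ¬ ∃ s ∈ S, w ≤ s} with hA
    have hUp : IsUpperSet A := by
      intro a b hab ha ⟨s, hs, hbs⟩
      exact ha ⟨s, hs, hab.trans hbs⟩
    have hmem : w0 ∈ {w | ∀ v, w ≤ v → (v ∈ {u | ∀ x, u < x → x ∈ A} → v ∈ A)} := by
      intro v _ hv ⟨s, hs, hvs⟩
      obtain ⟨t, ht, hst, hne⟩ := hno s hs
      have hlt : v < t := lt_of_le_of_lt hvs (lt_of_le_of_ne hst (Ne.symm hne))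
      exact hv t hlt ⟨t, ht, le_refl t⟩
    exact hLob A hUp hmem ⟨w0, hw0, le_refl w0⟩
  · intro hmax A hUp w hw
    have hwf : WellFounded (fun a b : W => b < a) := by
      rw [WellFounded.wellFounded_iff_has_min]
      intro s hs
      obtain ⟨m, hm, hmax'⟩ := hmax s hs
      exact ⟨m, hm, fun x hx hlt => hlt.ne' (hmax' x hx hlt.le)⟩
    -- prove ∀ v ≥ w, v ∈ A by well-founded recursion
    have key : ∀ v, w ≤ v → v ∈ A := by
      intro v
      induction v using hwf.induction with
      | _ v ih =>
        intro hwv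
        exact hw v hwv (fun x hx => ih x hx (hwv.trans hx.le))
    exact key w (le_refl w)
end

section
/- Let (W, ≤) be a poset and define for upward-closed A: ⊛A = {w | ∀v > w, v ∈ A}. Then for every upward-closed A and every upward-closed B, ⊛A ⊆ B ∪ (B → A), where → is the Heyting implication in Up(W); moreover A ⊆ ⊛A. Furthermore, for every w, w ∈ ⊛A iff for all upward-closed B, w ∈ (B → A) ∪ B. -/
theorem coderivative_properties {W : Type*} [PartialOrder W] :
    (∀ A B : Set W, IsUpperSet A → IsUpperSet B →
        {w | ∀ v, w < v → v ∈ A} ⊆ B ∪ {w | ∀ v, w ≤ v → v ∈ B → v ∈ A}) ∧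
    (∀ A : Set W, IsUpperSet A → A ⊆ {w | ∀ v, w < v → v ∈ A}) ∧
    (∀ A : Set W, IsUpperSet A → ∀ w : W,
        (w ∈ {u | ∀ v, u < v → v ∈ A}) ↔
          (∀ B : Set W, IsUpperSet B →
            w ∈ {u | ∀ v, u ≤ v → v ∈ B → v ∈ A} ∪ B)) := by
  refine ⟨?_, ?_, ?_⟩
  · intro A B hA hB w hw
    by_cases hwB : w ∈ B
    · exact Or.inl hwB
    · refine Or.inr fun v hle hvB => ?_
      rcases lt_or_eq_of_le hle with h | h
      · exact hw v h
      · exact absurd (h ▸ hvB) hwB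
  · intro A hA w hw v hv
    exact hA hv.le hw
  · intro A hA w
    constructor
    · intro hw B hB
      by_cases hwB : w ∈ B
      · exact Or.inr hwB
      · refine Or.inl fun v hle hvB => ?_
        rcases lt_or_eq_of_le hle with h | h
        · exact hw v h
        · exact absurd (h ▸ hvB) hwB
    · intro h v hv
      have hB : IsUpperSet {u : W | w < u} := fun a b hab ha => lt_of_lt_of_le ha hab
      rcases h _ hB with h1 | h1
      · exact h1 v hv.le hv
      · exact absurd h1 (lt_irrefl w)
end

section
/- Let H be a Heyting algebra with a normal operator □ satisfying the strong Löb law (□a ⇨ a) ≤ a. Then for all a, b ∈ H: if □a ≤ a ∨ b, then (b ⇨ a) ≤ a. -/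
theorem strong_lob_equivalent_form {H : Type*} [HeytingAlgebra H] (box : H → H)
    (htop : box ⊤ = ⊤) (hmeet : ∀ a b, box (a ⊓ b) = box a ⊓ box b)
    (hslob : ∀ a : H, (box a ⇨ a) ≤ a) :
    ∀ a b : H, box a ≤ a ⊔ b → (b ⇨ a) ≤ a := by
  intro a b h
  have key : (b ⇨ a) ≤ box a ⇨ a := by
    rw [le_himp_iff]
    calc (b ⇨ a) ⊓ box a ≤ (b ⇨ a) ⊓ (a ⊔ b) := inf_le_inf_left _ h
      _ = ((b ⇨ a) ⊓ a) ⊔ ((b ⇨ a) ⊓ b) := inf_sup_left _ _ _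
      _ ≤ a := sup_le inf_le_right himp_inf_le
  exact key.trans (hslob a)
end

section
/- Consider the poset ω+1 ordered by the converse of the ordinal order (so ω is the bottom-most in the presheaf base). Define the presheaf X on this poset by X(n) = {0,...,n} for finite n and X(ω) = ℕ, with restriction maps X(β ⊵ α)(n) = min(n, α). Define f : X → X by f_n(i) = min(i+1, n) and f_ω(i) = i+1. Then f is a natural transformation (a morphism of presheaves) but f has no global fixed point: there is no natural transformation c : 1 → X with f ∘ c = c. -/
/-- Restriction map of the presheaf `X` on `(ω+1, ⊵)`:
`ρ α i = min (i, α)`, computed in `ℕ` (when `α = ⊤` it is `i` itself). -/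
def presheafRho (α : ℕ∞) (i : ℕ) : ℕ := min i (α.untopD i)

/-- The endomorphism `f`: `f_α i = min (i + 1, α)`, i.e. `i + 1` at level `ω`. -/
def presheafF (α : ℕ∞) (i : ℕ) : ℕ := min (i + 1) (α.untopD (i + 1))

@[simp] lemma presheafRho_coe (n i : ℕ) : presheafRho n i = min i n := rfl

@[simp] lemma presheafRho_top (i : ℕ) : presheafRho ⊤ i = i := min_self i

@[simp] lemma presheafF_coe (n i : ℕ) : presheafF n i = min (i + 1) n := rfl

@[simp] lemma presheafF_top (i : ℕ) : presheafF ⊤ i = i + 1 := min_self _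

lemma presheafF_le (α : ℕ∞) (i : ℕ) : (presheafF α i : ℕ∞) ≤ α := by
  cases α using ENat.recTopCoe with
  | top => exact le_top
  | coe n => exact_mod_cast min_le_right _ _

lemma presheafRho_presheafF {α β : ℕ∞} (hαβ : α ≤ β) (i : ℕ) :
    presheafRho α (presheafF β i) = presheafF α (presheafRho α i) := by
  cases α using ENat.recTopCoe with
  | top => rw [top_le_iff.mp hαβ]; simp
  | coe n =>
    cases β using ENat.recTopCoe with
    | top => simp only [presheafRho_coe, presheafF_top, presheafF_coe]; omega
    | coe m =>
      have hnm : n ≤ m := by exact_mod_cast hαβ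
      simp only [presheafRho_coe, presheafF_coe]
      omega

/- Each finite level `n` has the fixed point `n`; the obstruction lives entirely at level `ω`,
where `f` is the successor map. -/
lemma presheafF_top_ne_self (i : ℕ) : presheafF ⊤ i ≠ i := by
  simp

theorem no_global_fixpoint :
    (∀ α : ℕ∞, ∀ i : ℕ, (i : ℕ∞) ≤ α → (presheafF α i : ℕ∞) ≤ α) ∧
    (∀ α β : ℕ∞, α ≤ β → ∀ i : ℕ, (i : ℕ∞) ≤ β →
        presheafRho α (presheafF β i) = presheafF α (presheafRho α i)) ∧
    ¬ ∃ c : ℕ∞ → ℕ,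
        (∀ α : ℕ∞, ((c α : ℕ∞)) ≤ α) ∧
        (∀ α β : ℕ∞, α ≤ β → presheafRho α (c β) = c α) ∧
        (∀ α : ℕ∞, presheafF α (c α) = c α) := by
  refine ⟨fun α i _ ↦ presheafF_le α i, fun α β hαβ i _ ↦ presheafRho_presheafF hαβ i, ?_⟩
  rintro ⟨c, -, -, hfix⟩
  exact presheafF_top_ne_self (c ⊤) (hfix ⊤)
end
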